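/- Let $N = 2$ and let $u$ be a positive superharmonic function on an exterior domain $\Omega \supseteq \{|x| > R_0\} \subset \mathbb{R}^2$. Then there exist constants $C > 0$ and $R_1 > R_0$ such that $\inf_{|x| = R} u(x) \le C \log R$ for all $R \ge R_1$. -/

import Mathlib

open Real Metric
noncomputable def laplacian (f : EuclideanSpace ℝ (Fin 2) → ℝ)
    (x : EuclideanSpace ℝ (Fin 2)) : ℝ :=
  ∑ i : Fin 2, fderiv ℝ (fun y => fderiv ℝ f y (EuclideanSpace.single i 1)) x
    (EuclideanSpace.single i 1)

namespace Stmt6Aux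
abbrev EE := EuclideanSpace ℝ (Fin 2)
noncomputable def n2 (x : EE) : ℝ := x 0 * x 0 + x 1 * x 1
lemma n2_eq (x : EE) : n2 x = ‖x‖ ^ 2 := by
  rw [EuclideanSpace.norm_eq, Real.sq_sqrt (by positivity)]
  simp [n2, Fin.sum_univ_two, Real.norm_eq_abs, sq_abs, sq]
lemma n2_pos {x : EE} (hx : 0 < ‖x‖) : 0 < n2 x := by
  rw [n2_eq]; positivity
noncomputable def Ln (x : EE) : EE →L[ℝ] ℝ :=
  (2 * x 0) • EuclideanSpace.proj 0 + (2 * x 1) • EuclideanSpace.proj (1 : Fin 2)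
lemma Ln_apply (x : EE) (i : Fin 2) : Ln x (EuclideanSpace.single i 1) = 2 * x i := by
  fin_cases i <;>
    simp [Ln, EuclideanSpace.single_apply]
lemma proj_single (i : Fin 2) :
    (EuclideanSpace.proj i : EE →L[ℝ] ℝ) (EuclideanSpace.single i 1) = 1 := by
  simp [EuclideanSpace.single_apply]
lemma hasFDerivAt_n2 (x : EE) : HasFDerivAt n2 (Ln x) x := by
  have h0 : HasFDerivAt (fun y : EE => y 0) (EuclideanSpace.proj (0 : Fin 2) : EE →L[ℝ] ℝ) x :=
    (EuclideanSpace.proj (0 : Fin 2) : EE →L[ℝ] ℝ).hasFDerivAt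
  have h1 : HasFDerivAt (fun y : EE => y 1) (EuclideanSpace.proj (1 : Fin 2) : EE →L[ℝ] ℝ) x :=
    (EuclideanSpace.proj (1 : Fin 2) : EE →L[ℝ] ℝ).hasFDerivAt
  have := (h0.mul h0).add (h1.mul h1)
  refine this.congr_fderiv ?_
  ext y
  simp [Ln]
  ring

variable {u : EE → ℝ} {a e b : ℝ}

lemma fderiv_F (a e b : ℝ) {y : EE} (hu : ContDiffAt ℝ 2 u y) (hy : 0 < ‖y‖) (i : Fin 2) :
    fderiv ℝ (fun z => u z + (a * Real.log (n2 z) + (e * n2 z + b))) y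
        (EuclideanSpace.single i 1)
      = fderiv ℝ u y (EuclideanSpace.single i 1)
        + (a * ((n2 y)⁻¹ * (2 * y i)) + e * (2 * y i)) := by
  have hn : n2 y ≠ 0 := (n2_pos hy).ne'
  have hlog : HasFDerivAt (fun z => Real.log (n2 z)) ((n2 y)⁻¹ • Ln y) y :=
    (hasFDerivAt_n2 y).log hn
  have hF : HasFDerivAt (fun z => u z + (a * Real.log (n2 z) + (e * n2 z + b)))
      (fderiv ℝ u y + (a • ((n2 y)⁻¹ • Ln y) + (e • Ln y + 0))) y :=
    (hu.differentiableAt (by norm_num)).hasFDerivAt.add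
      ((hlog.const_mul a).add (((hasFDerivAt_n2 y).const_mul e).add (hasFDerivAt_const b y)))
  rw [hF.fderiv]
  simp [Ln_apply]

lemma laplacian_F {U : Set EE} (hUo : IsOpen U) (hU : ∀ y ∈ U, 0 < ‖y‖)
    (hu : ∀ y ∈ U, ContDiffAt ℝ 2 u y) (a e b : ℝ) {x : EE} (hx : x ∈ U) :
    laplacian (fun z => u z + (a * Real.log (n2 z) + (e * n2 z + b))) x
      = laplacian u x + 4 * e := by
  have hn : n2 x ≠ 0 := (n2_pos (hU x hx)).ne'
  have key : ∀ i : Fin 2,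
      fderiv ℝ (fun y => fderiv ℝ (fun z => u z + (a * Real.log (n2 z) + (e * n2 z + b))) y
          (EuclideanSpace.single i 1)) x (EuclideanSpace.single i 1)
        = fderiv ℝ (fun y => fderiv ℝ u y (EuclideanSpace.single i 1)) x
            (EuclideanSpace.single i 1)
          + (a * ((n2 x)⁻¹ * 2 + (2 * x i) * (-((n2 x)^2)⁻¹ * (2 * x i))) + e * 2) := by
    intro i
    have hev : (fun y => fderiv ℝ (fun z => u z + (a * Real.log (n2 z) + (e * n2 z + b))) y
          (EuclideanSpace.single i 1))
        =ᶠ[nhds x] (fun y => fderiv ℝ u y (EuclideanSpace.single i 1)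
          + (a * ((n2 y)⁻¹ * (2 * y i)) + e * (2 * y i))) := by
      filter_upwards [hUo.mem_nhds hx] with y hy
      exact fderiv_F a e b (hu y hy) (hU y hy) i
    rw [hev.fderiv_eq]
    have hinv : HasFDerivAt (fun y : EE => (n2 y)⁻¹) ((-((n2 x)^2)⁻¹) • Ln x) x :=
      (hasDerivAt_inv hn).comp_hasFDerivAt x (hasFDerivAt_n2 x)
    have hyi : HasFDerivAt (fun y : EE => 2 * y i)
        ((2:ℝ) • (EuclideanSpace.proj i : EE →L[ℝ] ℝ)) x :=
      ((EuclideanSpace.proj i : EE →L[ℝ] ℝ).hasFDerivAt).const_mul 2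
    have hmul : HasFDerivAt (fun y : EE => (n2 y)⁻¹ * (2 * y i))
        ((n2 x)⁻¹ • ((2:ℝ) • (EuclideanSpace.proj i : EE →L[ℝ] ℝ))
          + (2 * x i) • ((-((n2 x)^2)⁻¹) • Ln x)) x := hinv.mul hyi
    have hrest := (hmul.const_mul a).add (hyi.const_mul e)
    have hdu : DifferentiableAt ℝ (fun y => fderiv ℝ u y (EuclideanSpace.single i 1)) x := by
      have h2 : ContDiffAt ℝ 1 (fderiv ℝ u) x := (hu x hx).fderiv_right (by norm_num)
      exact (h2.differentiableAt one_ne_zero).clm_apply (differentiableAt_const _)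
    rw [fderiv_fun_add hdu (g := fun y : EE => a * ((n2 y)⁻¹ * (2 * y i)) + e * (2 * y i))
      hrest.differentiableAt,
      HasFDerivAt.fderiv (f := fun y : EE => a * ((n2 y)⁻¹ * (2 * y i)) + e * (2 * y i)) hrest]
    simp [Ln_apply, proj_single]
    ring
  unfold laplacian
  rw [Fin.sum_univ_two, Fin.sum_univ_two, key 0, key 1]
  have hn2 : n2 x = x 0 * x 0 + x 1 * x 1 := rfl
  have hn' : x 0 * x 0 + x 1 * x 1 ≠ 0 := hn
  simp only [hn2]
  field_simp
  ring

lemma aux1d {g g1 : ℝ → ℝ} {c : ℝ} {W : Set ℝ} (hW : IsOpen W) (h0 : (0:ℝ) ∈ W)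
    (hg : ∀ t ∈ W, HasDerivAt g (g1 t) t) (hg1 : HasDerivAt g1 c 0)
    (hmin : ∀ᶠ t in nhds (0:ℝ), g 0 ≤ g t) : 0 ≤ c := by
  by_contra hc
  push_neg at hc
  have hz : g1 0 = 0 := by
    have hl : IsLocalMin g 0 := hmin
    exact hl.hasDerivAt_eq_zero (hg 0 h0)
  have hs : Filter.Tendsto (fun t => g1 t / t) (nhdsWithin 0 {(0:ℝ)}ᶜ) (nhds c) := by
    have := hasDerivAt_iff_tendsto_slope.mp hg1
    rw [show (fun t => g1 t / t) = fun t => t⁻¹ * g1 t from funext fun t => by rw [div_eq_inv_mul]]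
    simpa [slope_fun_def, hz] using this
  have hneg : ∀ᶠ t in nhdsWithin 0 {(0:ℝ)}ᶜ, g1 t / t < c/2 :=
    hs.eventually_lt_const (by linarith)
  rw [eventually_nhdsWithin_iff] at hneg
  obtain ⟨ε, hε, hball⟩ :=
    Metric.eventually_nhds_iff.mp ((hneg.and hmin).and (hW.eventually_mem h0))
  have hδ : 0 < ε/2 := by linarith
  have hsub : ∀ t ∈ Set.Icc (0:ℝ) (ε/2), dist t 0 < ε := by
    intro t ht
    rw [Real.dist_eq, sub_zero, abs_of_nonneg ht.1]
    linarith [ht.2]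
  have hanti : StrictAntiOn g (Set.Icc 0 (ε/2)) := by
    apply strictAntiOn_of_deriv_neg (convex_Icc 0 (ε/2))
    · intro t ht
      exact ((hg t (hball (hsub t ht)).2).continuousAt).continuousWithinAt
    · intro t ht
      rw [interior_Icc] at ht
      have hd := hball (hsub t ⟨le_of_lt ht.1, le_of_lt ht.2⟩)
      have h1 : g1 t / t < c/2 := hd.1.1 (by simp [ht.1.ne'])
      rw [(hg t hd.2).deriv]
      have := (div_lt_iff₀ ht.1).mp h1
      nlinarith [ht.1]
  have h1 : g (ε/2) < g 0 :=
    hanti ⟨le_refl 0, le_of_lt hδ⟩ ⟨le_of_lt hδ, le_refl _⟩ hδ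
  have h2 : g 0 ≤ g (ε/2) := (hball (hsub (ε/2) ⟨le_of_lt hδ, le_refl _⟩)).1.2
  linarith

lemma dir2_nonneg {F : EE → ℝ} {U : Set EE} (hUo : IsOpen U) {x : EE} (hx : x ∈ U)
    (hF : ∀ y ∈ U, ContDiffAt ℝ 2 F y) (hmin : IsLocalMin F x) (i : Fin 2) :
    0 ≤ fderiv ℝ (fun y => fderiv ℝ F y (EuclideanSpace.single i 1)) x
        (EuclideanSpace.single i 1) := by
  set e := EuclideanSpace.single i (1:ℝ) with he
  set ℓ : ℝ → EE := fun t => x + t • e with hℓdef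
  have hℓ : ∀ t, HasDerivAt ℓ e t := by
    intro t
    simpa [hℓdef] using ((hasDerivAt_id t).smul_const e).const_add x
  have hℓc : Continuous ℓ := by
    apply Continuous.add continuous_const
    exact (continuous_id.smul continuous_const)
  have hℓ0 : ℓ 0 = x := by simp [hℓdef]
  set W : Set ℝ := ℓ ⁻¹' U with hWdef
  have hWo : IsOpen W := hUo.preimage hℓc
  have h0W : (0:ℝ) ∈ W := by
    simp only [hWdef, Set.mem_preimage, hℓ0]
    exact hx
  have hg : ∀ t ∈ W, HasDerivAt (fun s => F (ℓ s)) (fderiv ℝ F (ℓ t) e) t := by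
    intro t ht
    exact HasFDerivAt.comp_hasDerivAt t
      (((hF (ℓ t) ht).differentiableAt (by norm_num)).hasFDerivAt) (hℓ t)
  have hG : DifferentiableAt ℝ (fun y => fderiv ℝ F y e) x := by
    have h2 : ContDiffAt ℝ 1 (fderiv ℝ F) x := (hF x hx).fderiv_right (by norm_num)
    exact (h2.differentiableAt one_ne_zero).clm_apply (differentiableAt_const _)
  have hg1 : HasDerivAt (fun t => fderiv ℝ F (ℓ t) e)
      (fderiv ℝ (fun y => fderiv ℝ F y e) x e) 0 := by
    have hG' : HasFDerivAt (fun y => fderiv ℝ F y e)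
        (fderiv ℝ (fun y => fderiv ℝ F y e) x) (ℓ 0) := by
      rw [hℓ0]; exact hG.hasFDerivAt
    exact HasFDerivAt.comp_hasDerivAt 0 hG' (hℓ 0)
  have hmin' : ∀ᶠ t in nhds (0:ℝ), F (ℓ 0) ≤ F (ℓ t) := by
    have htd : Filter.Tendsto ℓ (nhds 0) (nhds x) := by
      rw [← hℓ0]; exact hℓc.continuousAt
    have := htd.eventually hmin
    simpa [hℓ0] using this
  exact aux1d hWo h0W hg hg1 hmin'


lemma contDiffAt_n2 (y : EE) : ContDiffAt ℝ 2 n2 y := by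
  have h0 : ContDiff ℝ 2 (fun y : EE => y 0) := (EuclideanSpace.proj (0 : Fin 2) : EE →L[ℝ] ℝ).contDiff
  have h1 : ContDiff ℝ 2 (fun y : EE => y 1) := (EuclideanSpace.proj (1 : Fin 2) : EE →L[ℝ] ℝ).contDiff
  exact (((h0.mul h0).add (h1.mul h1)).contDiffAt)

lemma minprin {R₀ r₁ R₂ : ℝ} (hR₀ : 0 < R₀) (h1 : R₀ < r₁) (h12 : r₁ < R₂)
    {u : EE → ℝ} (hu : ∀ y : EE, R₀ < ‖y‖ → ContDiffAt ℝ 2 u y)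
    (hsuper : ∀ y : EE, R₀ < ‖y‖ → laplacian u y ≤ 0)
    (a b : ℝ)
    (hbdry : ∀ y : EE, ‖y‖ = r₁ ∨ ‖y‖ = R₂ → a * Real.log (n2 y) + b ≤ u y)
    {x : EE} (hx1 : r₁ ≤ ‖x‖) (hx2 : ‖x‖ ≤ R₂) :
    a * Real.log (n2 x) + b ≤ u x := by
  set U : Set EE := {y | R₀ < ‖y‖} with hUdef
  have hUo : IsOpen U := isOpen_lt continuous_const continuous_norm
  have hUn : ∀ y ∈ U, 0 < ‖y‖ := fun y hy => lt_trans hR₀ hy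
  set A : Set EE := {y | r₁ ≤ ‖y‖ ∧ ‖y‖ ≤ R₂} with hAdef
  have hAU : A ⊆ U := fun y hy => lt_of_lt_of_le h1 hy.1
  have hAcl : IsClosed A :=
    (isClosed_le continuous_const continuous_norm).inter
      (isClosed_le continuous_norm continuous_const)
  have hAc : IsCompact A := by
    apply (isCompact_closedBall (0 : EE) R₂).of_isClosed_subset hAcl
    intro y hy
    simpa [mem_closedBall_zero_iff] using hy.2
  have hAx : x ∈ A := ⟨hx1, hx2⟩
  have key : ∀ ε > (0:ℝ), a * Real.log (n2 x) + b - u x ≤ ε * R₂ ^ 2 := by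
    intro ε hε
    set F : EE → ℝ := fun z => u z + ((-a) * Real.log (n2 z) + ((-ε) * n2 z + (-b))) with hFdef
    have hFc : ∀ y ∈ U, ContDiffAt ℝ 2 F y := by
      intro y hy
      have hn : n2 y ≠ 0 := (n2_pos (hUn y hy)).ne'
      exact (hu y hy).add ((contDiffAt_const.mul ((contDiffAt_n2 y).log hn)).add
        ((contDiffAt_const.mul (contDiffAt_n2 y)).add contDiffAt_const))
    have hFcont : ContinuousOn F A := fun y hy =>
      ((hFc y (hAU hy)).continuousAt).continuousWithinAt
    obtain ⟨z, hzA, hzmin⟩ := hAc.exists_isMinOn ⟨x, hAx⟩ hFcont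
    have hlapF : laplacian F z = laplacian u z + 4 * (-ε) :=
      laplacian_F hUo hUn hu (-a) (-ε) (-b) (hAU hzA)
    have hbd : ‖z‖ = r₁ ∨ ‖z‖ = R₂ := by
      by_contra hcon
      push_neg at hcon
      have hz1 : r₁ < ‖z‖ := lt_of_le_of_ne hzA.1 (Ne.symm hcon.1)
      have hz2 : ‖z‖ < R₂ := lt_of_le_of_ne hzA.2 hcon.2
      have hVo : IsOpen {y : EE | r₁ < ‖y‖ ∧ ‖y‖ < R₂} :=
        (isOpen_lt continuous_const continuous_norm).inter
          (isOpen_lt continuous_norm continuous_const)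
      have hloc : IsLocalMin F z := hzmin.isLocalMin
        (Filter.mem_of_superset (hVo.mem_nhds ⟨hz1, hz2⟩)
          (fun y hy => ⟨le_of_lt hy.1, le_of_lt hy.2⟩))
      have hge : 0 ≤ laplacian F z := by
        unfold laplacian
        apply Finset.sum_nonneg
        intro i _
        exact dir2_nonneg hUo (hAU hzA) hFc hloc i
      have hle : laplacian u z ≤ 0 := hsuper z (hAU hzA)
      rw [hlapF] at hge
      linarith
   -- boundary case
    have hn2z : n2 z ≤ R₂ ^ 2 := by
      rw [n2_eq]
      apply pow_le_pow_left₀ (norm_nonneg z) hzA.2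
    have hFz : -(ε * R₂ ^ 2) ≤ F z := by
      have := hbdry z hbd
      have h0 : 0 ≤ n2 z := by rw [n2_eq]; positivity
      simp only [hFdef]
      nlinarith
    have hFx : F z ≤ F x := hzmin hAx
    have h0x : 0 ≤ n2 x := by rw [n2_eq]; positivity
    simp only [hFdef] at hFz hFx
    nlinarith [mul_nonneg (le_of_lt hε) h0x]
  by_contra hcon
  push_neg at hcon
  set d := a * Real.log (n2 x) + b - u x with hd
  have hdpos : 0 < d := by simp [hd]; linarith
  have hR2 : (0:ℝ) < R₂ ^ 2 := pow_pos (lt_trans (lt_trans hR₀ h1) h12) 2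
  have := key (d / (2 * R₂ ^ 2)) (div_pos hdpos (by linarith))
  rw [div_mul_eq_mul_div, mul_comm] at this
  have h2 : R₂ ^ 2 * d / (2 * R₂ ^ 2) = d / 2 := by
    rw [div_eq_div_iff (ne_of_gt (by linarith)) (by norm_num : (2:ℝ) ≠ 0)]
    ring
  rw [h2] at this
  linarith

end Stmt6Aux

open Stmt6Aux in
theorem stmt_6 (R₀ : ℝ) (hR₀ : 0 < R₀)
    (Ω : Set (EuclideanSpace ℝ (Fin 2)))
    (hΩ : {x : EuclideanSpace ℝ (Fin 2) | R₀ < ‖x‖} ⊆ Ω)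
    (u : EuclideanSpace ℝ (Fin 2) → ℝ)
    (hreg : ContDiffOn ℝ 2 u Ω)
    (hpos : ∀ x ∈ Ω, 0 < u x)
    (hsuper : ∀ x ∈ Ω, laplacian u x ≤ 0) :
    ∃ C > 0, ∃ R₁ > R₀, ∀ R ≥ R₁,
      sInf (u '' {x : EuclideanSpace ℝ (Fin 2) | ‖x‖ = R}) ≤ C * Real.log R := by
  have hUo : IsOpen {x : EE | R₀ < ‖x‖} := isOpen_lt continuous_const continuous_norm
  have hu : ∀ y : EE, R₀ < ‖y‖ → ContDiffAt ℝ 2 u y := by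
    intro y hy
    exact ((hreg.mono hΩ) y hy).contDiffAt (hUo.mem_nhds hy)
  have hsuper' : ∀ y : EE, R₀ < ‖y‖ → laplacian u y ≤ 0 := fun y hy => hsuper y (hΩ hy)
  set r₁ : ℝ := 2 * R₀ + 2 with hr₁def
  have hr₁R₀ : R₀ < r₁ := by linarith
  have hr₁2 : (2:ℝ) ≤ r₁ := by linarith
  have hr₁pos : 0 < r₁ := by linarith
  set p : EE := (2 * r₁) • EuclideanSpace.single 0 (1:ℝ) with hpdef
  have hpnorm : ‖p‖ = 2 * r₁ := by
    rw [hpdef, norm_smul, EuclideanSpace.norm_single, norm_one, mul_one, Real.norm_eq_abs,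
      abs_of_pos (by linarith : (0:ℝ) < 2 * r₁)]
  have hpΩ : p ∈ Ω := hΩ (by simp only [Set.mem_setOf_eq, hpnorm]; linarith)
  have hup : 0 < u p := hpos p hpΩ
  have hlog2 : (0:ℝ) < Real.log 2 := Real.log_pos (by norm_num)
  have hlr : Real.log 2 ≤ Real.log r₁ := (Real.log_le_log_iff (by norm_num) hr₁pos).mpr hr₁2
  have hlrpos : 0 < Real.log r₁ := lt_of_lt_of_le hlog2 hlr
  refine ⟨u p / Real.log 2, div_pos hup hlog2, 4 * r₁, by linarith, ?_⟩
  intro R hR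
  have hRr₁ : r₁ < R := by linarith
  have hRpos : 0 < R := by linarith
  have hRR₀ : R₀ < R := by linarith
  have hLR : Real.log r₁ < Real.log R := Real.log_lt_log hr₁pos hRr₁
  set lr := Real.log r₁
  set LR := Real.log R
  -- the sphere and its infimum
  set S : Set EE := {x : EE | ‖x‖ = R} with hSdef
  have hSne : (u '' S).Nonempty := by
    refine ⟨u (R • EuclideanSpace.single 0 (1:ℝ)), ⟨R • EuclideanSpace.single 0 (1:ℝ), ?_, rfl⟩⟩
    simp only [hSdef, Set.mem_setOf_eq, norm_smul, EuclideanSpace.norm_single]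
    simp [abs_of_pos hRpos]
  have hlb : ∀ v ∈ u '' S, (0:ℝ) ≤ v := by
    rintro v ⟨y, hy, rfl⟩
    have hy' : ‖y‖ = R := hy
    exact le_of_lt (hpos y (hΩ (show R₀ < ‖y‖ by rw [hy']; exact hRR₀)))
  have hSbdd : BddBelow (u '' S) := ⟨0, hlb⟩
  set I := sInf (u '' S) with hIdef
  have hI0 : 0 ≤ I := le_csInf hSne hlb
  have hIle : ∀ y : EE, ‖y‖ = R → I ≤ u y := fun y hy => csInf_le hSbdd ⟨y, hy, rfl⟩
  -- comparison function
  set D : ℝ := 2 * LR - 2 * lr with hDdef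
  have hDpos : 0 < D := by simp only [hDdef]; linarith
  set a' : ℝ := I / D with ha'def
  have ha'0 : 0 ≤ a' := div_nonneg hI0 (le_of_lt hDpos)
  have hbdry : ∀ y : EE, ‖y‖ = r₁ ∨ ‖y‖ = R →
      a' * Real.log (n2 y) + (-(a' * (2 * lr))) ≤ u y := by
    intro y hy
    rcases hy with hy | hy
    · have hyΩ : y ∈ Ω := hΩ (by simp only [Set.mem_setOf_eq]; rw [hy]; exact hr₁R₀)
      have : Real.log (n2 y) = 2 * lr := by
        rw [n2_eq, hy, Real.log_pow]
        norm_num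
        rfl
      rw [this]
      have := hpos y hyΩ
      linarith
    · have : Real.log (n2 y) = 2 * LR := by
        rw [n2_eq, hy, Real.log_pow]
        norm_num
        rfl
      rw [this]
      have hcalc : a' * (2 * LR) + (-(a' * (2 * lr))) = I := by
        have : a' * (2 * LR) + (-(a' * (2 * lr))) = a' * D := by
          simp only [hDdef]; ring
        rw [this, ha'def, div_mul_cancel₀ _ (ne_of_gt hDpos)]
      rw [hcalc]
      exact hIle y hy
  have hmain := minprin hR₀ hr₁R₀ hRr₁ hu hsuper' a' (-(a' * (2 * lr))) hbdry
    (show r₁ ≤ ‖p‖ by rw [hpnorm]; linarith) (show ‖p‖ ≤ R by rw [hpnorm]; linarith)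
  have hn2p : Real.log (n2 p) = 2 * (Real.log 2 + lr) := by
    rw [n2_eq, hpnorm, Real.log_pow, Real.log_mul (by norm_num) (ne_of_gt hr₁pos)]
    norm_num
    rfl
  rw [hn2p] at hmain
  -- hmain : a' * (2 * (log 2 + lr)) - a' * (2 * lr) ≤ u p, i.e. a' * (2 * log 2) ≤ u p
  have hkey : a' * (2 * Real.log 2) ≤ u p := by linarith
  -- multiply through
  have hID : I * (2 * Real.log 2) ≤ u p * D := by
    have h1 : a' * (2 * Real.log 2) * D ≤ u p * D :=
      mul_le_mul_of_nonneg_right hkey (le_of_lt hDpos)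
    have h2 : a' * (2 * Real.log 2) * D = I * (2 * Real.log 2) := by
      rw [ha'def]
      field_simp
    linarith [h2 ▸ h1]
  have hgoal : I * Real.log 2 ≤ u p * LR := by
    have hupnn : 0 ≤ u p := le_of_lt hup
    nlinarith [mul_nonneg hupnn (le_of_lt hlrpos)]
  rw [div_mul_eq_mul_div, le_div_iff₀ hlog2]
  linarith
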